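/- arXiv:2310.02747 — 4 statements merged into one kernel-verified Lean document; each statement's English description precedes it below -/
import Mathlib

section
/- Let m, n ∈ ℕ with m ≥ 3 odd and n ≥ 2, let p, q ∈ ZMod m, and let A ⊆ E_m^n(p). For a set B ⊆ (ZMod m)^n and r ∈ ZMod m write B_r := {v ∈ (ZMod m)^(n−1) : (v, r) ∈ B}. Then |(N_{Z_m^n}(A, E_m^n(p+1)))_q| ≥ max{ |N_{Z_m^{n−1}}(A_q, E_m^{n−1}(p − q + 1))|, |A_{q−1}| }, and symmetrically |(N_{Z_m^n}(A, E_m^n(p−1)))_q| ≥ max{ |N_{Z_m^{n−1}}(A_q, E_m^{n−1}(p − q − 1))|, |A_{q+1}| }. -/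
/-- The discrete torus `Z_m^n`: the graph on `(ZMod m)^n` where two vertices are adjacent
iff they differ by `±1 (mod m)` in exactly one coordinate. -/
def torus (m n : ℕ) : SimpleGraph (Fin n → ZMod m) :=
  SimpleGraph.fromRel fun u v =>
    ∃ j : Fin n, (u j = v j + 1 ∨ u j = v j - 1) ∧ ∀ i : Fin n, i ≠ j → u i = v i

/-- A set of vertices is independent if its vertices are pairwise non-adjacent. -/
def IsIndep {V : Type*} (G : SimpleGraph V) (s : Set V) : Prop :=
  s.Pairwise fun u v => ¬ G.Adj u v

/-- `N_G(X) := (⋃ x ∈ X, N_G(x)) \ X`. -/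
def nbhd {V : Type*} (G : SimpleGraph V) (X : Set V) : Set V :=
  (⋃ x ∈ X, G.neighborSet x) \ X

/-- `N_G(X, Y) := N_G(X) ∩ Y`. -/
def nbhdIn {V : Type*} (G : SimpleGraph V) (X Y : Set V) : Set V :=
  nbhd G X ∩ Y

/-- `E_m^n(p)`: the vertices of `Z_m^n` whose coordinate sum is `p` modulo `m`. -/
def Eclass (m n : ℕ) (p : ZMod m) : Set (Fin n → ZMod m) :=
  {v | ∑ i, v i = p}

/-- A maximum independent set: an independent set of the largest possible cardinality. -/
def MaxIndep {V : Type*} (G : SimpleGraph V) (s : Set V) : Prop :=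
  IsIndep G s ∧ ∀ t : Set V, IsIndep G t → t.ncard ≤ s.ncard

/-- The vertex `(v, r)` of `Z_m^n`: first `n−1` coordinates given by `v`, last coordinate
`r`. -/
def snocFun (m n : ℕ) (v : Fin (n - 1) → ZMod m) (r : ZMod m) : Fin n → ZMod m :=
  fun i => if h : i.1 < n - 1 then v ⟨i.1, h⟩ else r

/-- The torusSlice `B_r := {v ∈ (ZMod m)^(n−1) : (v, r) ∈ B}`. -/
def torusSlice (m n : ℕ) (B : Set (Fin n → ZMod m)) (r : ZMod m) :
    Set (Fin (n - 1) → ZMod m) :=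
  {v | snocFun m n v r ∈ B}

lemma snoc_castSucc (m k : ℕ) (v : Fin ((k+1)-1) → ZMod m) (r : ZMod m) (i : Fin k) :
    snocFun m (k+1) v r i.castSucc = v i :=
  dif_pos i.2

lemma snoc_last (m k : ℕ) (v : Fin ((k+1)-1) → ZMod m) (r : ZMod m) :
    snocFun m (k+1) v r (Fin.last k) = r := by
  simp [snocFun, Fin.last]

lemma sum_snoc (m k : ℕ) (v : Fin ((k+1)-1) → ZMod m) (r : ZMod m) :
    ∑ i, snocFun m (k+1) v r i = (∑ i : Fin k, v i) + r := by
  rw [Fin.sum_univ_castSucc]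
  congr 1
  · exact Finset.sum_congr rfl fun i _ => by rw [snoc_castSucc]
  · exact snoc_last m k v r

lemma snoc_left_inj (m k : ℕ) {v w : Fin ((k+1)-1) → ZMod m} (r : ZMod m)
    (h : snocFun m (k+1) v r = snocFun m (k+1) w r) : v = w := by
  funext i
  have := congrFun h (Fin.castSucc ⟨i.1, i.2⟩)
  rwa [snoc_castSucc, snoc_castSucc] at this

lemma torus_adj_snoc (m k : ℕ) {v w : Fin ((k+1)-1) → ZMod m} (r : ZMod m)
    (h : (torus m k).Adj v w) :
    (torus m (k+1)).Adj (snocFun m (k+1) v r) (snocFun m (k+1) w r) := by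
  rw [torus, SimpleGraph.fromRel_adj] at h ⊢
  obtain ⟨hne, hrel⟩ := h
  refine ⟨fun hc => hne (snoc_left_inj m k r hc), ?_⟩
  have lift : ∀ a b : Fin k → ZMod m,
      (∃ j : Fin k, (a j = b j + 1 ∨ a j = b j - 1) ∧ ∀ i : Fin k, i ≠ j → a i = b i) →
      ∃ j : Fin (k+1), (snocFun m (k+1) a r j = snocFun m (k+1) b r j + 1 ∨
        snocFun m (k+1) a r j = snocFun m (k+1) b r j - 1) ∧
        ∀ i : Fin (k+1), i ≠ j → snocFun m (k+1) a r i = snocFun m (k+1) b r i := by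
    rintro a b ⟨j, hj1, hj2⟩
    refine ⟨j.castSucc, ?_, ?_⟩
    · rw [snoc_castSucc, snoc_castSucc]
      simpa using hj1
    · intro i hi
      by_cases hik : i.1 < k
      · have : i = Fin.castSucc ⟨i.1, hik⟩ := rfl
        rw [this, snoc_castSucc, snoc_castSucc]
        apply hj2
        intro hc
        apply hi
        rw [this, hc]
      · have hik2 : i.1 < k + 1 := i.2
        have : i = Fin.last k := Fin.ext (by simp only [Fin.val_last]; omega)
        rw [this, snoc_last, snoc_last]
  rcases hrel with h | h
  · exact Or.inl (lift v w h)
  · exact Or.inr (lift w v h)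

lemma key (m k : ℕ) (hm : 3 ≤ m) (p q e : ZMod m) (he : e = 1 ∨ e = -1)
    (A : Set (Fin (k+1) → ZMod m)) (hA : A ⊆ Eclass m (k+1) p) :
    max ((nbhdIn (torus m k) (torusSlice m (k+1) A q) (Eclass m k (p - q + e))).ncard)
        ((torusSlice m (k+1) A (q - e)).ncard) ≤
      (torusSlice m (k+1) (nbhdIn (torus m (k+1)) A (Eclass m (k+1) (p + e))) q).ncard := by
  haveI : NeZero m := ⟨by omega⟩
  haveI : Fact (1 < m) := ⟨by omega⟩
  have h10 : (1 : ZMod m) ≠ 0 := one_ne_zero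
  have he0 : e ≠ 0 := by
    rcases he with rfl | rfl
    · exact h10
    · intro hc; exact h10 (by simpa using (neg_eq_zero.mp hc))
  apply max_le
  · apply Set.ncard_le_ncard _ (Set.toFinite _)
    rintro v ⟨⟨hv1, hv2⟩, hv3⟩
    simp only [Set.mem_iUnion, SimpleGraph.mem_neighborSet] at hv1
    obtain ⟨w, hwA, hadj⟩ := hv1
    have hvsum : ∑ i, v i = p - q + e := hv3
    have hsum : ∑ i, snocFun m (k+1) v q i = p + e := by
      rw [sum_snoc, hvsum]; ring
    refine ⟨⟨?_, ?_⟩, hsum⟩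
    · simp only [Set.mem_iUnion, SimpleGraph.mem_neighborSet]
      exact ⟨snocFun m (k+1) w q, hwA, torus_adj_snoc m k q hadj⟩
    · intro hc
      have := hA hc
      rw [Eclass, Set.mem_setOf_eq, hsum] at this
      exact he0 (by linear_combination this)
  · apply Set.ncard_le_ncard _ (Set.toFinite _)
    intro v hv
    have hvA : snocFun m (k+1) v (q - e) ∈ A := hv
    have hsumA : (∑ i, v i) + (q - e) = p := by
      have := hA hvA
      rwa [Eclass, Set.mem_setOf_eq, sum_snoc] at this
    have hsumA' : (∑ i : Fin k, v i) + (q - e) = p := hsumA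
    have hsum : ∑ i, snocFun m (k+1) v q i = p + e := by
      rw [sum_snoc]; linear_combination hsumA'
    refine ⟨⟨?_, ?_⟩, hsum⟩
    · simp only [Set.mem_iUnion, SimpleGraph.mem_neighborSet]
      refine ⟨snocFun m (k+1) v (q - e), hvA, ?_⟩
      rw [torus, SimpleGraph.fromRel_adj]
      constructor
      · intro hc
        have := congrFun hc (Fin.last k)
        rw [snoc_last, snoc_last] at this
        exact he0 (by linear_combination -this)
      · left
        refine ⟨Fin.last k, ?_, ?_⟩
        · rw [snoc_last, snoc_last]
          rcases he with rfl | rfl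
          · right; ring
          · left; ring
        · intro i hi
          have hik : i.1 < k := by
            rcases Nat.lt_or_ge i.1 k with h | h
            · exact h
            · have hik2 : i.1 < k + 1 := i.2
              exact absurd (Fin.ext (by simp only [Fin.val_last]; omega)) hi
          have : i = Fin.castSucc ⟨i.1, hik⟩ := rfl
          rw [this, snoc_castSucc, snoc_castSucc]
    · intro hc
      have := hA hc
      rw [Eclass, Set.mem_setOf_eq, hsum] at this
      exact he0 (by linear_combination this)


/-- Slice estimate: for `A ⊆ E_m^n(p)`,
`|(N(A, E_m^n(p±1)))_q| ≥ max{|N(A_q, E_m^{n−1}(p−q±1))|, |A_{q∓1}|}`. -/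
theorem stmt_16 (m n : ℕ) (hm : 3 ≤ m) (hmo : Odd m) (hn : 2 ≤ n)
    (p q : ZMod m) (A : Set (Fin n → ZMod m)) (hA : A ⊆ Eclass m n p) :
    max ((nbhdIn (torus m (n - 1)) (torusSlice m n A q) (Eclass m (n - 1) (p - q + 1))).ncard)
        ((torusSlice m n A (q - 1)).ncard) ≤
      (torusSlice m n (nbhdIn (torus m n) A (Eclass m n (p + 1))) q).ncard ∧
    max ((nbhdIn (torus m (n - 1)) (torusSlice m n A q) (Eclass m (n - 1) (p - q - 1))).ncard)
        ((torusSlice m n A (q + 1)).ncard) ≤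
      (torusSlice m n (nbhdIn (torus m n) A (Eclass m n (p - 1))) q).ncard := by
  obtain ⟨k, rfl⟩ : ∃ k, n = k + 1 := ⟨n - 1, by omega⟩
  constructor
  · exact key m k hm p q 1 (Or.inl rfl) A hA
  · have := key m k hm p q (-1) (Or.inr rfl) A hA
    rw [show p - q + -1 = p - q - 1 by ring, show q - -1 = q + 1 by ring,
      show p + -1 = p - 1 by ring] at this
    exact this
end

section
/- Let m ∈ ℕ, m ≥ 1, and δ > 0, and let α : ZMod m → ℝ satisfy α(q−1) ≤ α(q) + δ for all q ∈ ZMod m. Let ᾱ := (Σ_{q ∈ ZMod m} α(q)) / m be the mean. Then α(q) ∈ [ᾱ − ((m−1)/2)·δ, ᾱ + ((m−1)/2)·δ] for every q ∈ ZMod m. The same conclusion holds if instead α(q+1) ≤ α(q) + δ for all q ∈ ZMod m. -/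
/-!
Iterating `α (q - 1) ≤ α q + δ` gives `α (q - k) ≤ α q + k δ`. Summing this over `k = 0, …, m - 1`
compares `α q` with every value of `α` and, since `∑ k < m, k = m (m - 1) / 2`, bounds
`m α q` above and below by `∑ α` up to `m (m - 1) / 2 · δ`. The condition `α (q + 1) ≤ α q + δ`
is the same condition for `q ↦ α (-q)`, which has the same mean.
-/

open Finset

lemma sum_val_zmod (m : ℕ) [NeZero m] :
    ∑ x : ZMod m, (x.val : ℝ) = m * (m - 1) / 2 := by
  obtain ⟨n, rfl⟩ := Nat.exists_eq_succ_of_ne_zero (NeZero.ne m)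
  change ∑ i : Fin (n + 1), ((i : ℕ) : ℝ) = _
  have h : ((∑ i ∈ range (n + 1), i : ℕ) : ℝ) * 2 = (n + 1) * n := by
    exact_mod_cast sum_range_id_mul_two (n + 1)
  rw [Fin.sum_univ_eq_sum_range (fun i => (i : ℝ))]
  push_cast at h ⊢
  linarith

lemma apply_sub_natCast_le {G : Type*} [AddGroupWithOne G] {δ : ℝ} {α : G → ℝ}
    (h : ∀ q, α (q - 1) ≤ α q + δ) (k : ℕ) (q : G) : α (q - k) ≤ α q + k * δ := by
  induction k generalizing q with
  | zero => simp
  | succ k ih =>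
    calc α (q - ↑(k + 1)) = α (q - 1 - k) := by rw [Nat.cast_succ, sub_add_eq_sub_sub_swap]
      _ ≤ α (q - 1) + k * δ := ih (q - 1)
      _ ≤ α q + ↑(k + 1) * δ := by push_cast; linarith [h q]

section SubOneLe

variable {m : ℕ} [NeZero m] {δ : ℝ} {α : ZMod m → ℝ} (h : ∀ q, α (q - 1) ≤ α q + δ)
include h

lemma apply_sub_val_le (x q : ZMod m) : α (q - x) ≤ α q + x.val * δ := by
  simpa using apply_sub_natCast_le h x.val q

lemma sum_le_card_mul_add (q : ZMod m) :
    ∑ x, α x ≤ m * α q + m * (m - 1) / 2 * δ :=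
  calc ∑ x, α x = ∑ x, α (q - x) := (Fintype.sum_equiv (Equiv.subLeft q) _ _ fun _ => rfl).symm
    _ ≤ ∑ x : ZMod m, (α q + x.val * δ) := sum_le_sum fun x _ => apply_sub_val_le h x q
    _ = m * α q + m * (m - 1) / 2 * δ := by
      simp only [sum_add_distrib, ← sum_mul, sum_val_zmod, sum_const, card_univ, ZMod.card,
        nsmul_eq_mul]

lemma card_mul_le_sum_add (q : ZMod m) :
    m * α q ≤ ∑ x, α x + m * (m - 1) / 2 * δ :=
  calc m * α q = ∑ x : ZMod m, α (q + x - x) := by simp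
    _ ≤ ∑ x : ZMod m, (α (q + x) + x.val * δ) :=
      sum_le_sum fun x _ => apply_sub_val_le h x (q + x)
    _ = ∑ x, α x + m * (m - 1) / 2 * δ := by
      rw [sum_add_distrib, ← sum_mul, sum_val_zmod,
        Fintype.sum_equiv (Equiv.addLeft q) (fun x => α (q + x)) α fun _ => rfl]

lemma mem_Icc_mean_of_sub_one_le (q : ZMod m) :
    α q ∈ Set.Icc ((∑ x, α x) / m - ((m : ℝ) - 1) / 2 * δ)
      ((∑ x, α x) / m + ((m : ℝ) - 1) / 2 * δ) := by
  have hm : (0 : ℝ) < m := by exact_mod_cast Nat.pos_of_neZero m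
  have hsum := sum_le_card_mul_add h q
  have hcard := card_mul_le_sum_add h q
  constructor
  · rw [div_sub' hm.ne', div_le_iff₀ hm]
    linarith
  · rw [div_add' _ _ _ hm.ne', le_div_iff₀ hm]
    linarith

end SubOneLe

theorem stmt_17_general (m : ℕ) [NeZero m] (δ : ℝ) (α : ZMod m → ℝ)
    (h : (∀ q : ZMod m, α (q - 1) ≤ α q + δ) ∨ (∀ q : ZMod m, α (q + 1) ≤ α q + δ)) :
    ∀ q : ZMod m,
      α q ∈ Set.Icc ((∑ x : ZMod m, α x) / m - ((m : ℝ) - 1) / 2 * δ)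
        ((∑ x : ZMod m, α x) / m + ((m : ℝ) - 1) / 2 * δ) := by
  rcases h with h | h
  · exact mem_Icc_mean_of_sub_one_le h
  · intro q
    have h_neg : ∀ p : ZMod m, α (-(p - 1)) ≤ α (-p) + δ := fun p => by
      simpa [neg_sub, sub_eq_neg_add] using h (-p)
    have h_sum : ∑ x, α (-x) = ∑ x, α x := Fintype.sum_equiv (Equiv.neg _) _ _ fun _ => rfl
    simpa [h_sum] using
      mem_Icc_mean_of_sub_one_le (α := fun x => α (-x)) h_neg (-q)

/-- If `α : ZMod m → ℝ` satisfies `α(q−1) ≤ α(q) + δ` for all `q` (or `α(q+1) ≤ α(q) + δ`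
for all `q`), then every `α(q)` is within `((m−1)/2)·δ` of the mean of `α`. -/
theorem stmt_17 (m : ℕ) [NeZero m] (δ : ℝ) (hδ : 0 < δ) (α : ZMod m → ℝ)
    (h : (∀ q : ZMod m, α (q - 1) ≤ α q + δ) ∨ (∀ q : ZMod m, α (q + 1) ≤ α q + δ)) :
    ∀ q : ZMod m,
      α q ∈ Set.Icc ((∑ x : ZMod m, α x) / m - ((m : ℝ) - 1) / 2 * δ)
        ((∑ x : ZMod m, α x) / m + ((m : ℝ) - 1) / 2 * δ) :=
  stmt_17_general m δ α h
end

section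
/- Let a < b be real numbers, let g : [a, b] → ℝ be concave, let m ∈ ℕ with ℓ := ⌊m/2⌋, and let x_1, …, x_m ∈ [a, b] satisfy Σ_{i=1}^m x_i = m·(a+b)/2. Then Σ_{i=1}^m g(x_i) ≥ ℓ·g(a) + ℓ·g(b) + (m − 2ℓ)·g((a+b)/2); i.e., among all such m-tuples the sum Σ g(x_i) is minimized by taking ℓ copies of a, ℓ copies of b, and (if m is odd) one copy of (a+b)/2. -/
/-!
A concave `g` lies above the broken line through `(a, g a)`, `(c, g c)`, `(b, g b)`, where
`c = (a + b) / 2`. Summing over the `xᵢ` and using `∑ (xᵢ - c) = 0` gives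
`∑ g(xᵢ) ≥ m g(c) - (2 g(c) - g(a) - g(b)) · P / h`, with `h = (b - a) / 2` and
`P = ∑ max (xᵢ - c) 0`. The positive and negative deviations from `c` balance and each is at
most `h`, so `P` is at most `h` times the number of `xᵢ` on either side of `c`; hence
`P ≤ ⌊m/2⌋ h`, and `2 g(c) - g(a) - g(b) ≥ 0` by concavity.
-/

open Finset

theorem ConcaveOn.brokenLine_le {g : ℝ → ℝ} {a b c x : ℝ} (hg : ConcaveOn ℝ (Set.Icc a b) g)
    (hac : a < c) (hcb : c < b) (hx : x ∈ Set.Icc a b) :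
    g c + slope g a c * (x - c) + (slope g c b - slope g a c) * max (x - c) 0 ≤ g x := by
  rcases eq_or_ne x c with rfl | hxc
  · simp
  have hc : c ∈ Set.Icc a b := ⟨hac.le, hcb.le⟩
  have ha : a ∈ Set.Icc a b \ {c} := ⟨⟨le_rfl, (hac.trans hcb).le⟩, hac.ne⟩
  have hb : b ∈ Set.Icc a b \ {c} := ⟨⟨(hac.trans hcb).le, le_rfl⟩, hcb.ne'⟩
  have hx' : x ∈ Set.Icc a b \ {c} := ⟨hx, hxc⟩
  have hgx : g x = g c + slope g c x * (x - c) := by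
    simpa [mul_comm, add_comm] using (sub_smul_slope_vadd g c x).symm
  rw [slope_comm g a c, hgx]
  rcases le_total x c with hle | hge
  · have hslope : slope g c x ≤ slope g c a := hg.slope_anti hc ha hx' hx.1
    rw [max_eq_right (sub_nonpos.2 hle)]
    nlinarith
  · have hslope : slope g c b ≤ slope g c x := hg.slope_anti hc hx' hb hx.2
    rw [max_eq_left (sub_nonneg.2 hge)]
    nlinarith

theorem sum_max_zero_le_of_sum_eq_zero {ι : Type*} [Fintype ι] {y : ι → ℝ} {h : ℝ}
    (hy : ∀ i, |y i| ≤ h) (hsum : ∑ i, y i = 0) :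
    ∑ i, max (y i) 0 ≤ (Fintype.card ι / 2 : ℕ) * h := by
  classical
  rcases isEmpty_or_nonempty ι with hι | ⟨⟨i₀⟩⟩
  · simp
  have h0 : 0 ≤ h := (abs_nonneg _).trans (hy i₀)
  set S := univ.filter (fun i => 0 < y i)
  have hpos : ∑ i, max (y i) 0 = ∑ i ∈ S, y i := by
    rw [sum_filter]
    refine sum_congr rfl fun i _ => ?_
    split_ifs with hi
    · exact max_eq_left hi.le
    · exact max_eq_right (not_lt.1 hi)
  have hneg : ∑ i ∈ S, y i = ∑ i ∈ Sᶜ, -y i := by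
    rw [sum_neg_distrib, eq_neg_iff_add_eq_zero, sum_add_sum_compl, hsum]
  have hS : ∑ i ∈ S, y i ≤ #S * h := by
    simpa using sum_le_card_nsmul S y h fun i _ => (le_abs_self _).trans (hy i)
  have hSc : ∑ i ∈ Sᶜ, -y i ≤ #Sᶜ * h := by
    simpa using sum_le_card_nsmul Sᶜ (fun i => -y i) h fun i _ => (neg_le_abs _).trans (hy i)
  have hcard : #S + #Sᶜ = Fintype.card ι := card_add_card_compl S
  calc ∑ i, max (y i) 0 ≤ (min #S #Sᶜ : ℕ) * h := by
        rw [Nat.cast_min, min_mul_of_nonneg _ _ h0, hpos]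
        exact le_min hS (hneg ▸ hSc)
    _ ≤ (Fintype.card ι / 2 : ℕ) * h := by gcongr; omega

/-- For `g` concave on `[a, b]` and `x₁, …, x_m ∈ [a, b]` with `Σ xᵢ = m·(a+b)/2`,
`Σ g(xᵢ) ≥ ℓ·g(a) + ℓ·g(b) + (m − 2ℓ)·g((a+b)/2)` where `ℓ = ⌊m/2⌋`; i.e., the sum is
minimized by `ℓ` copies of `a`, `ℓ` copies of `b`, and (if `m` is odd) one copy of
`(a+b)/2`. -/
theorem stmt_18 (a b : ℝ) (hab : a < b) (g : ℝ → ℝ)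
    (hg : ConcaveOn ℝ (Set.Icc a b) g) (m : ℕ) (x : Fin m → ℝ)
    (hx : ∀ i, x i ∈ Set.Icc a b) (hsum : ∑ i, x i = m * (a + b) / 2) :
    ((m / 2 : ℕ) : ℝ) * g a + ((m / 2 : ℕ) : ℝ) * g b +
        ((m : ℝ) - 2 * ((m / 2 : ℕ) : ℝ)) * g ((a + b) / 2) ≤
      ∑ i, g (x i) := by
  set c := (a + b) / 2 with hc
  set h := (b - a) / 2 with hh
  have hac : a < c := by linarith
  have hcb : c < b := by linarith
  have hcentered : ∑ i, (x i - c) = 0 := by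
    rw [sum_sub_distrib, hsum, sum_const, card_univ, Fintype.card_fin, nsmul_eq_mul, hc]; ring
  have hdev (i : Fin m) : |x i - c| ≤ h :=
    abs_sub_le_iff.2 ⟨by linarith [(hx i).2], by linarith [(hx i).1]⟩
  have hP : ∑ i, max (x i - c) 0 ≤ (m / 2 : ℕ) * h := by
    simpa using sum_max_zero_le_of_sum_eq_zero hdev hcentered
  have hslope : slope g c b ≤ slope g a c := by
    simpa only [slope_def_field] using
      hg.slope_anti_adjacent ⟨le_rfl, hab.le⟩ ⟨hab.le, le_rfl⟩ hac hcb
  have hbroken : m * g c + slope g a c * ∑ i, (x i - c) +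
      (slope g c b - slope g a c) * ∑ i, max (x i - c) 0 ≤ ∑ i, g (x i) := by
    have := sum_le_sum fun i (_ : i ∈ univ) => hg.brokenLine_le hac hcb (hx i)
    simpa only [sum_add_distrib, ← mul_sum, sum_const, card_univ, Fintype.card_fin,
      nsmul_eq_mul] using this
  have hgap : (slope g c b - slope g a c) * ((m / 2 : ℕ) * h) =
      (m / 2 : ℕ) * (g a + g b - 2 * g c) := by
    rw [slope_def_field, slope_def_field, show b - c = h by linarith, show c - a = h by linarith]
    field_simp [(show 0 < h by linarith).ne']
    ring
  rw [hcentered] at hbroken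
  linarith [mul_le_mul_of_nonpos_left hP (sub_nonpos.2 hslope)]
end

section
/- Let m, n ∈ ℕ with m ≥ 3 odd and ℓ := ⌊m/2⌋. Let P be a nonempty independent set of the cycle Z_m^1 (i.e., a set P ⊆ ZMod m containing no two cyclically consecutive residues), and let A ⊆ ∪_{p ∈ P} E_m^n(p). Writing α_p := |A ∩ E_m^n(p)| / m^(n−1) for p ∈ P, one has |N_{Z_m^n}(A)| ≥ |A| + max_{p ∈ P} |A ∩ E_m^n(p)| + (m^(n−1)/√(ℓ³·m·n)) · Σ_{p ∈ P} α_p·(1 − α_p). -/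
open Finset Real

lemma sqrt_two_mul_mul_sqrt_two_mul_add_two_le (k : ℕ) :
    √(2 * k) * √(2 * k + 2) ≤ 2 * k + 1 := by
  rw [← Real.sqrt_mul (by positivity)]
  refine Real.sqrt_le_iff.2 ⟨by positivity, ?_⟩
  nlinarith

lemma mul_sqrt_two_mul_le {m : ℕ} (hm : 2 ≤ m) (k : ℕ) :
    m * √(2 * k) ≤ 4 * √(((m / 2 : ℕ) : ℝ) ^ 3 * m * ((k + 1 : ℕ) : ℝ)) := by
  have hℓ : (1 : ℝ) ≤ (m / 2 : ℕ) := by exact_mod_cast (by omega : 1 ≤ m / 2)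
  have hmℓ : (m : ℝ) ≤ 3 * (m / 2 : ℕ) := by exact_mod_cast (by omega : m ≤ 3 * (m / 2))
  refine (pow_le_pow_iff_left₀ (by positivity) (by positivity) two_ne_zero).1 ?_
  rw [mul_pow, mul_pow, Real.sq_sqrt (by positivity), Real.sq_sqrt (by positivity)]
  generalize ((m / 2 : ℕ) : ℝ) = ℓ at *
  have hk : (0 : ℝ) ≤ k := k.cast_nonneg
  have hℓ3 : ℓ ≤ ℓ ^ 3 := le_self_pow₀ hℓ (by norm_num)
  push_cast
  nlinarith [mul_le_mul_of_nonneg_right hmℓ hk, mul_le_mul_of_nonneg_right hℓ3 hk]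

section Numeric

variable {k : ℕ} {m N S Q D L : ℝ}

lemma four_mul_mul_sub_le_of_small_variance (hm : 0 < m) (hN : 0 < N) (hL : 0 ≤ L)
    (hsmall : 2 * (k + 1) * (m * Q - S ^ 2) ≤ S * (m * N - S))
    (hsum : 4 * (N * S - Q) ≤ m * N * √(2 * k) * L) :
    4 * (S * (m * N - S)) ≤ m ^ 2 * N * √(2 * k + 2) * L := by
  have hR' : √(2 * k + 2) ^ 2 = 2 * k + 2 := Real.sq_sqrt (by positivity)
  have hRR' := sqrt_two_mul_mul_sqrt_two_mul_add_two_le k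
  have hpos : (0 : ℝ) < 2 * k + 1 := by positivity
  -- `m (N S - Q) = S (m N - S) - (m Q - S²)` is at least `(2k+1)/(2k+2)` of `S (m N - S)`
  have h1 : (2 * k + 1) * (4 * (S * (m * N - S))) ≤ (2 * k + 2) * (m * (4 * (N * S - Q))) := by
    nlinarith
  have h2 : (2 * k + 2) * √(2 * k) ≤ (2 * k + 1) * √(2 * k + 2) := by
    calc (2 * k + 2) * √(2 * k) = √(2 * k + 2) * (√(2 * k) * √(2 * k + 2)) := by
          linear_combination (-√(2 * k)) * hR'
      _ ≤ √(2 * k + 2) * (2 * k + 1) := mul_le_mul_of_nonneg_left hRR' (Real.sqrt_nonneg _)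
      _ = (2 * k + 1) * √(2 * k + 2) := by ring
  have h3 : 0 ≤ m ^ 2 * N * L := by positivity
  refine le_of_mul_le_mul_left ?_ hpos
  calc (2 * k + 1) * (4 * (S * (m * N - S)))
      ≤ (2 * k + 2) * (m * (m * N * √(2 * k) * L)) := by
        refine h1.trans (mul_le_mul_of_nonneg_left ?_ (by positivity))
        exact mul_le_mul_of_nonneg_left hsum hm.le
    _ = (2 * k + 2) * √(2 * k) * (m ^ 2 * N * L) := by ring
    _ ≤ (2 * k + 1) * √(2 * k + 2) * (m ^ 2 * N * L) := mul_le_mul_of_nonneg_right h2 h3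
    _ = (2 * k + 1) * (m ^ 2 * N * √(2 * k + 2) * L) := by ring

lemma four_mul_mul_sub_le_of_large_variance (hm : 0 < m) (hN : 0 < N) (hS₀ : 0 ≤ S)
    (hS : S ≤ m * N) (hD₀ : 0 ≤ D) (hDL : D ≤ L) (hvar : 4 * (m * Q - S ^ 2) ≤ (m * D) ^ 2)
    (hlarge : S * (m * N - S) < 2 * (k + 1) * (m * Q - S ^ 2)) :
    4 * (S * (m * N - S)) ≤ m ^ 2 * N * √(2 * k + 2) * L := by
  have hR' : √(2 * k + 2) ^ 2 = 2 * k + 2 := Real.sq_sqrt (by positivity)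
  set Φ := S * (m * N - S)
  have hΦ₀ : 0 ≤ Φ := mul_nonneg hS₀ (by linarith)
  have hΦ : 4 * Φ ≤ (m * N) ^ 2 := by nlinarith [sq_nonneg (m * N - 2 * S)]
  have hmD : (m * D) ^ 2 ≤ (m * L) ^ 2 := by gcongr
  have hsq : (4 * Φ) ^ 2 ≤ (m ^ 2 * N * √(2 * k + 2) * L) ^ 2 := by
    calc (4 * Φ) ^ 2 ≤ 4 * Φ * (2 * (k + 1) * (4 * (m * Q - S ^ 2))) := by nlinarith
      _ ≤ 4 * Φ * (2 * (k + 1) * (m * L) ^ 2) := by gcongr; linarith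
      _ ≤ (m * N) ^ 2 * (2 * (k + 1) * (m * L) ^ 2) := by gcongr
      _ = (m ^ 2 * N * √(2 * k + 2) * L) ^ 2 := by
        linear_combination (-(m ^ 4 * N ^ 2 * L ^ 2)) * hR'
  have : 0 ≤ m ^ 2 * N * √(2 * k + 2) * L := by have := hD₀.trans hDL; positivity
  exact (pow_le_pow_iff_left₀ (by linarith) this two_ne_zero).1 hsq

/-- `S` and `Q` stand for `∑ x t` and `∑ x t ^ 2` over `m` values `x t ∈ [0, N]` with
`max - min = D`. -/
lemma four_mul_mul_sub_le_of_spread_le (hm : 0 < m) (hN : 0 < N) (hS₀ : 0 ≤ S)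
    (hS : S ≤ m * N) (hD₀ : 0 ≤ D) (hDL : D ≤ L) (hvar : 4 * (m * Q - S ^ 2) ≤ (m * D) ^ 2)
    (hsum : 4 * (N * S - Q) ≤ m * N * √(2 * k) * L) :
    4 * (S * (m * N - S)) ≤ m ^ 2 * N * √(2 * k + 2) * L := by
  rcases le_or_gt (2 * (k + 1) * (m * Q - S ^ 2)) (S * (m * N - S)) with hsmall | hlarge
  · exact four_mul_mul_sub_le_of_small_variance hm hN (hD₀.trans hDL) hsmall hsum
  · exact four_mul_mul_sub_le_of_large_variance hm hN hS₀ hS hD₀ hDL hvar hlarge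

end Numeric

lemma four_mul_card_mul_sum_sq_sub_sq_le {ι : Type*} (s : Finset ι) (x : ι → ℝ) {a b : ℝ}
    (ha : ∀ i ∈ s, a ≤ x i) (hb : ∀ i ∈ s, x i ≤ b) :
    4 * (#s * ∑ i ∈ s, x i ^ 2 - (∑ i ∈ s, x i) ^ 2) ≤ (#s * (b - a)) ^ 2 := by
  have h : 0 ≤ ∑ i ∈ s, (b - x i) * (x i - a) :=
    sum_nonneg fun i hi => mul_nonneg (sub_nonneg.2 (hb i hi)) (sub_nonneg.2 (ha i hi))
  have hexp : ∑ i ∈ s, (b - x i) * (x i - a) =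
      (a + b) * ∑ i ∈ s, x i - ∑ i ∈ s, x i ^ 2 - #s * (a * b) := by
    simp only [← nsmul_eq_mul, ← sum_const, mul_sum, ← sum_sub_distrib]
    exact sum_congr rfl fun i _ => by ring
  rw [hexp] at h
  nlinarith [sq_nonneg (2 * ∑ i ∈ s, x i - #s * (a + b)), (#s).cast_nonneg (α := ℝ)]

lemma sub_le_sum_max_zero_sub {m : ℕ} [NeZero m] (x : ZMod m → ℝ) (s r : ZMod m) :
    x s - x r ≤ ∑ t, max 0 (x (t - 1) - x t) := by
  obtain ⟨d, hd, rfl⟩ : ∃ d < m, r = s + d := ⟨(r - s).val, ZMod.val_lt _, by simp⟩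
  have hinj : Set.InjOn (fun i : ℕ => s + ((i + 1 : ℕ) : ZMod m)) (range d) := by
    intro i hi j hj hij
    have hi : i < m := (mem_range.1 hi).trans hd
    have hj : j < m := (mem_range.1 hj).trans hd
    have hij : ((i : ℕ) : ZMod m) = j := by push_cast at hij; linear_combination hij
    rw [← ZMod.val_cast_of_lt hi, ← ZMod.val_cast_of_lt hj, hij]
  calc x s - x (s + d) = ∑ i ∈ range d, (x (s + i) - x (s + (i + 1 : ℕ))) := by
        rw [sum_range_sub']; simp
    _ ≤ ∑ i ∈ range d, max 0 (x (s + (i + 1 : ℕ) - 1) - x (s + (i + 1 : ℕ))) :=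
        sum_le_sum fun i _ => le_max_of_le_right <| by
          rw [show s + ((i + 1 : ℕ) : ZMod m) - 1 = s + i by push_cast; ring]
    _ = ∑ t ∈ (range d).image fun i : ℕ => s + ((i + 1 : ℕ) : ZMod m),
          max 0 (x (t - 1) - x t) := (sum_image (f := fun t => max 0 (x (t - 1) - x t)) hinj).symm
    _ ≤ ∑ t, max 0 (x (t - 1) - x t) := sum_le_univ_sum_of_nonneg fun _ => le_max_left _ _

/-- `x t` and `M t` are the sizes of the slices at height `t` of a set and of its up-closure. -/
lemma four_mul_sum_mul_le_of_cyclic {m : ℕ} [NeZero m] {N : ℝ} (hN : 0 < N) (k : ℕ)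
    (x M : ZMod m → ℝ) (hx₀ : ∀ t, 0 ≤ x t) (hxN : ∀ t, x t ≤ N)
    (hxM : ∀ t, x t ≤ M t) (hpred : ∀ t, x (t - 1) ≤ M t)
    (h : ∀ t, 4 * (x t * (N - x t)) ≤ m * N * √(2 * k) * (M t - x t)) :
    4 * ((∑ t, x t) * (m * N - ∑ t, x t)) ≤
      m ^ 2 * N * √(2 * k + 2) * (∑ t, M t - ∑ t, x t) := by
  have hcard : (#(univ : Finset (ZMod m)) : ℝ) = m := by simp
  obtain ⟨s, -, hs⟩ := exists_max_image univ x univ_nonempty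
  obtain ⟨r, -, hr⟩ := exists_min_image univ x univ_nonempty
  refine four_mul_mul_sub_le_of_spread_le (Q := ∑ t, x t ^ 2) (D := x s - x r)
    (by exact_mod_cast Nat.pos_of_neZero m) hN (sum_nonneg fun t _ => hx₀ t) ?_
    (sub_nonneg.2 (hs r (mem_univ r))) ?_ ?_ ?_
  · simpa [hcard] using sum_le_card_nsmul univ x N fun t _ => hxN t
  · rw [← sum_sub_distrib]
    refine (sub_le_sum_max_zero_sub x s r).trans (sum_le_sum fun t _ => ?_)
    exact max_le (sub_nonneg.2 (hxM t)) (by linarith [hpred t])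
  · simpa [hcard] using four_mul_card_mul_sum_sq_sub_sq_le univ x
      (fun t _ => hr t (mem_univ t)) (fun t _ => hs t (mem_univ t))
  · have := sum_le_sum fun t (_ : t ∈ univ) => h t
    rw [← mul_sum, ← mul_sum, sum_sub_distrib] at this
    have e : ∑ t, x t * (N - x t) = N * ∑ t, x t - ∑ t, x t ^ 2 := by
      rw [mul_sum, ← sum_sub_distrib]
      exact sum_congr rfl fun t _ => by ring
    rwa [e] at this

section Cube

variable {m : ℕ}

def upShift {n : ℕ} (B : Finset (Fin n → ZMod m)) : Finset (Fin n → ZMod m) :=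
  univ.biUnion fun j => B.image (· + Pi.single j 1)

lemma mem_upShift {n : ℕ} {B : Finset (Fin n → ZMod m)} {w : Fin n → ZMod m} :
    w ∈ upShift B ↔ ∃ j, ∃ v ∈ B, v + Pi.single j 1 = w := by
  simp only [upShift, mem_biUnion, mem_univ, true_and, mem_image]

variable [NeZero m] {k : ℕ}

def sliceAt (B : Finset (Fin (k + 1) → ZMod m)) (t : ZMod m) : Finset (Fin k → ZMod m) :=
  univ.filter fun w => Fin.cons t w ∈ B

lemma mem_sliceAt {B : Finset (Fin (k + 1) → ZMod m)} {t : ZMod m} {w : Fin k → ZMod m} :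
    w ∈ sliceAt B t ↔ Fin.cons t w ∈ B := by
  simp [sliceAt]

lemma card_eq_sum_card_sliceAt (B : Finset (Fin (k + 1) → ZMod m)) :
    #B = ∑ t, #(sliceAt B t) := by
  rw [card_eq_sum_card_fiberwise (f := fun v => v 0) (t := univ) fun _ _ => mem_univ _]
  refine sum_congr rfl fun t _ => card_nbij' Fin.tail (fun w => Fin.cons t w) ?_ ?_ ?_ ?_
  · intro v hv
    rw [mem_coe, mem_filter] at hv
    simpa [mem_sliceAt, ← hv.2] using hv.1
  · intro w hw
    simpa [mem_sliceAt] using hw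
  · intro v hv
    rw [mem_coe, mem_filter] at hv
    simp [← hv.2]
  · intro w _
    simp

lemma sliceAt_mono {B C : Finset (Fin (k + 1) → ZMod m)} (h : B ⊆ C) (t : ZMod m) :
    sliceAt B t ⊆ sliceAt C t := fun _ hw => mem_sliceAt.2 (h (mem_sliceAt.1 hw))

lemma upShift_sliceAt_subset (B : Finset (Fin (k + 1) → ZMod m)) (t : ZMod m) :
    upShift (sliceAt B t) ⊆ sliceAt (upShift B) t := by
  intro w hw
  obtain ⟨j, v, hv, rfl⟩ := mem_upShift.1 hw
  refine mem_sliceAt.2 (mem_upShift.2 ⟨j.succ, Fin.cons t v, mem_sliceAt.1 hv, ?_⟩)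
  ext i
  refine Fin.cases ?_ (fun i => ?_) i <;> simp [Pi.single_apply]

lemma sliceAt_sub_one_subset (B : Finset (Fin (k + 1) → ZMod m)) (t : ZMod m) :
    sliceAt B (t - 1) ⊆ sliceAt (upShift B) t := by
  intro w hw
  refine mem_sliceAt.2 (mem_upShift.2 ⟨0, Fin.cons (t - 1) w, mem_sliceAt.1 hw, ?_⟩)
  ext i
  refine Fin.cases ?_ (fun i => ?_) i <;> simp

theorem four_mul_card_mul_le_card_union_upShift :
    ∀ (k : ℕ) (B : Finset (Fin k → ZMod m)),
      4 * (#B * ((m : ℝ) ^ k - #B)) ≤ m ^ (k + 1) * √(2 * k) * (#(B ∪ upShift B) - #B)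
  | 0, B => by
    have : #B ≤ 1 := by simpa using card_le_univ B
    interval_cases #B <;> simp
  | k + 1, B => by
    have hN : (0 : ℝ) < m ^ k := by have := Nat.pos_of_neZero m; positivity
    have hstep := four_mul_sum_mul_le_of_cyclic hN k (fun t => #(sliceAt B t))
      (fun t => #(sliceAt (B ∪ upShift B) t)) (fun _ => by positivity)
      (fun t => by exact_mod_cast (card_le_univ (sliceAt B t)).trans_eq (by simp))
      (fun t => by gcongr; exact sliceAt_mono subset_union_left t)
      (fun t => by
        gcongr; exact (sliceAt_sub_one_subset B t).trans (sliceAt_mono subset_union_right t))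
      (fun t => by
        have ih := four_mul_card_mul_le_card_union_upShift k (sliceAt B t)
        rw [pow_succ'] at ih
        refine ih.trans (mul_le_mul_of_nonneg_left ?_ (by positivity))
        gcongr
        exact union_subset (sliceAt_mono subset_union_left t)
            ((upShift_sliceAt_subset B t).trans (sliceAt_mono subset_union_right t)))
    simp only [← Nat.cast_sum, ← card_eq_sum_card_sliceAt] at hstep
    convert hstep using 2 <;> push_cast <;> ring_nf

end Cube

section Classes

open scoped Pointwise

variable {m n k : ℕ}

lemma eq_of_sum_eq_of_tail_eq {p : ZMod m} {v w : Fin (k + 1) → ZMod m}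
    (hv : ∑ i, v i = p) (hw : ∑ i, w i = p) (h : Fin.tail v = Fin.tail w) : v = w := by
  rw [Fin.sum_univ_succ] at hv hw
  have h0 : v 0 = w 0 := by
    have : ∑ i : Fin k, v i.succ = ∑ i : Fin k, w i.succ := congrArg (∑ i, · i) h
    rw [this] at hv
    exact add_right_cancel (hv.trans hw.symm)
  rw [← Fin.cons_self_tail v, ← Fin.cons_self_tail w, h0, h]

lemma image_tail_upShift (B : Finset (Fin (k + 1) → ZMod m)) :
    (upShift B).image Fin.tail = B.image Fin.tail ∪ upShift (B.image Fin.tail) := by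
  ext w
  simp only [mem_image, mem_union, mem_upShift]
  constructor
  · rintro ⟨_, ⟨j, v, hv, rfl⟩, rfl⟩
    refine Fin.cases (Or.inl ⟨v, hv, ?_⟩) (fun j => Or.inr ⟨j, _, ⟨v, hv, rfl⟩, ?_⟩) j
    all_goals ext i; simp [Fin.tail, Pi.single_apply]
  · rintro (⟨v, hv, rfl⟩ | ⟨j, _, ⟨v, hv, rfl⟩, rfl⟩)
    · exact ⟨_, ⟨0, v, hv, rfl⟩, by ext i; simp [Fin.tail]⟩
    · exact ⟨_, ⟨j.succ, v, hv, rfl⟩, by ext i; simp [Fin.tail, Pi.single_apply]⟩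

lemma sum_add_single_one (v : Fin n → ZMod m) (j : Fin n) :
    ∑ i, (v + Pi.single j 1 : Fin n → ZMod m) i = ∑ i, v i + 1 := by
  simp [sum_add_distrib]

lemma sum_eq_add_one_of_mem_upShift {B : Finset (Fin n → ZMod m)} {p : ZMod m}
    (hB : ∀ v ∈ B, ∑ i, v i = p) {w : Fin n → ZMod m} (hw : w ∈ upShift B) :
    ∑ i, w i = p + 1 := by
  obtain ⟨j, v, hv, rfl⟩ := mem_upShift.1 hw
  rw [sum_add_single_one, hB v hv]

lemma card_image_tail {B : Finset (Fin (k + 1) → ZMod m)} {p : ZMod m}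
    (hB : ∀ v ∈ B, ∑ i, v i = p) : #(B.image Fin.tail) = #B :=
  card_image_of_injOn fun v hv w hw => eq_of_sum_eq_of_tail_eq (hB v hv) (hB w hw)

/-- The term `m^(n-1) / √(ℓ³ m n) · α (1 - α)` of a class with `α = a / m^(n-1)`,
where `n = k + 1`. -/
noncomputable def classGain (m k : ℕ) (a : ℝ) : ℝ :=
  (m : ℝ) ^ k / √(((m / 2 : ℕ) : ℝ) ^ 3 * m * ((k + 1 : ℕ) : ℝ)) *
    (a / m ^ k * (1 - a / m ^ k))

lemma classGain_nonneg {a : ℝ} (ha₀ : 0 ≤ a) (ha : a ≤ (m : ℝ) ^ k) :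
    0 ≤ classGain m k a := by
  have : a / (m : ℝ) ^ k ≤ 1 := div_le_one_of_le₀ ha (by positivity)
  have : 0 ≤ 1 - a / (m : ℝ) ^ k := by linarith
  unfold classGain
  positivity

variable [NeZero m]

theorem card_le_card_upShift_and_four_mul_le {B : Finset (Fin (k + 1) → ZMod m)} {p : ZMod m}
    (hB : ∀ v ∈ B, ∑ i, v i = p) :
    #B ≤ #(upShift B) ∧
      4 * (#B * ((m : ℝ) ^ k - #B)) ≤ m ^ (k + 1) * √(2 * k) * (#(upShift B) - #B) := by
  have hU : #(upShift B) = #(B.image Fin.tail ∪ upShift (B.image Fin.tail)) := by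
    rw [← image_tail_upShift, card_image_tail fun w => sum_eq_add_one_of_mem_upShift hB]
  rw [hU, ← card_image_tail hB]
  exact ⟨card_le_card subset_union_left, four_mul_card_mul_le_card_union_upShift k _⟩

theorem card_add_le_card_upShift (hm : 2 ≤ m) {B : Finset (Fin (k + 1) → ZMod m)}
    {p : ZMod m} (hB : ∀ v ∈ B, ∑ i, v i = p) :
    #B + classGain m k #B ≤ #(upShift B) := by
  obtain ⟨hle, h4⟩ := card_le_card_upShift_and_four_mul_le hB
  unfold classGain
  set C := √(((m / 2 : ℕ) : ℝ) ^ 3 * m * ((k + 1 : ℕ) : ℝ))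
  have hC : 0 < C := by
    have : 1 ≤ m / 2 := by omega
    positivity
  have hN : (0 : ℝ) < (m : ℝ) ^ k := by positivity
  have hU : (0 : ℝ) ≤ #(upShift B) - #B := sub_nonneg.2 (by exact_mod_cast hle)
  have hmain : 4 * (#B * ((m : ℝ) ^ k - #B)) ≤ 4 * ((m : ℝ) ^ k * C * (#(upShift B) - #B)) :=
    calc 4 * (#B * ((m : ℝ) ^ k - #B)) ≤ m ^ (k + 1) * √(2 * k) * (#(upShift B) - #B) := h4
      _ = (m : ℝ) ^ k * (#(upShift B) - #B) * (m * √(2 * k)) := by ring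
      _ ≤ (m : ℝ) ^ k * (#(upShift B) - #B) * (4 * C) :=
          mul_le_mul_of_nonneg_left (mul_sqrt_two_mul_le hm k) (by positivity)
      _ = 4 * ((m : ℝ) ^ k * C * (#(upShift B) - #B)) := by ring
  have hgain : (m : ℝ) ^ k / C * (#B / (m : ℝ) ^ k * (1 - #B / (m : ℝ) ^ k)) =
      #B * ((m : ℝ) ^ k - #B) / ((m : ℝ) ^ k * C) := by
    field_simp
  rw [hgain, ← le_sub_iff_add_le', div_le_iff₀ (by positivity)]
  linarith

theorem card_add_le_card_neg_upShift_neg (hm : 2 ≤ m) {B : Finset (Fin (k + 1) → ZMod m)}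
    {p : ZMod m} (hB : ∀ v ∈ B, ∑ i, v i = p) :
    #B + classGain m k #B ≤ #(-upShift (-B)) := by
  have hB' : ∀ v ∈ -B, ∑ i, v i = -p := fun v hv => by
    rw [← hB _ (mem_neg'.1 hv)]; simp
  simpa only [card_neg] using card_add_le_card_upShift hm hB'

end Classes

section Torus

open scoped Pointwise

variable {m n : ℕ}

lemma torus_adj_add_single [Nontrivial (ZMod m)] (v : Fin n → ZMod m) (j : Fin n) :
    (torus m n).Adj v (v + Pi.single j 1) := by
  refine SimpleGraph.fromRel_adj _ _ _ |>.2 ⟨fun h => ?_, Or.inr ⟨j, Or.inl (by simp), ?_⟩⟩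
  · simpa using congrFun h j
  · intro i hi
    simp [hi]

lemma mem_nbhd_inter_Eclass {P : Set (ZMod m)} {A : Set (Fin n → ZMod m)}
    (hA : A ⊆ ⋃ p ∈ P, Eclass m n p) {v w : Fin n → ZMod m} (hv : v ∈ A)
    (hvw : (torus m n).Adj v w) (hw : ∑ i, w i ∉ P) :
    w ∈ nbhd (torus m n) A ∩ Eclass m n (∑ i, w i) := by
  refine ⟨⟨Set.mem_biUnion hv hvw, fun hwA => ?_⟩, rfl⟩
  obtain ⟨p, hp, hwp⟩ := Set.mem_iUnion₂.1 (hA hwA)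
  exact hw (hwp ▸ hp)

variable [Nontrivial (ZMod m)] {P : Set (ZMod m)} {A : Set (Fin n → ZMod m)}
  {B : Finset (Fin n → ZMod m)} {p : ZMod m}

lemma coe_upShift_subset (hA : A ⊆ ⋃ p ∈ P, Eclass m n p) (hBA : ↑B ⊆ A)
    (hB : ∀ v ∈ B, ∑ i, v i = p) (hp : p + 1 ∉ P) :
    ↑(upShift B) ⊆ nbhd (torus m n) A ∩ Eclass m n (p + 1) := by
  intro w hw
  obtain ⟨j, v, hv, rfl⟩ := mem_upShift.1 hw
  rw [← sum_eq_add_one_of_mem_upShift hB hw] at hp ⊢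
  exact mem_nbhd_inter_Eclass hA (hBA hv) (torus_adj_add_single v j) hp

lemma coe_neg_upShift_neg_subset (hA : A ⊆ ⋃ p ∈ P, Eclass m n p) (hBA : ↑B ⊆ A)
    (hB : ∀ v ∈ B, ∑ i, v i = p) (hp : p - 1 ∉ P) :
    ↑(-upShift (-B)) ⊆ nbhd (torus m n) A ∩ Eclass m n (p - 1) := by
  intro w hw
  obtain ⟨j, v, hv, hvw⟩ := mem_upShift.1 (mem_neg'.1 hw)
  rw [mem_neg'] at hv
  obtain rfl : w = -v - Pi.single j 1 := by rw [← neg_neg w, ← hvw]; abel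
  have hsum : ∑ i, (-v - Pi.single j 1 : Fin n → ZMod m) i = p - 1 := by
    simp [sum_sub_distrib, ← hB _ hv]
  rw [← hsum] at hp ⊢
  refine mem_nbhd_inter_Eclass hA (hBA hv) ?_ hp
  have := (torus_adj_add_single (-v - Pi.single j 1) j).symm
  rw [sub_add_cancel] at this
  exact this

end Torus

lemma ncard_eq_sum_ncard_inter_Eclass {m n : ℕ} [NeZero m] (X : Set (Fin n → ZMod m))
    (T : Finset (ZMod m)) (hX : ∀ v ∈ X, ∑ i, v i ∈ T) :
    X.ncard = ∑ p ∈ T, (X ∩ Eclass m n p).ncard := by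
  classical
  rw [Set.ncard_eq_toFinset_card X, card_eq_sum_card_fiberwise (f := fun v => ∑ i, v i) (t := T)
    fun v hv => hX v (by simpa using hv)]
  refine sum_congr rfl fun p _ => ?_
  rw [← Set.ncard_coe_finset]
  congr 1
  ext v
  simp [Eclass]

lemma exists_injOn_add_one_or_sub_one {m : ℕ} (hm : Odd m) {P : Set (ZMod m)}
    (hP : ∀ p ∈ P, p + 1 ∉ P) {p₀ : ZMod m} (hp₀ : p₀ ∈ P) :
    ∃ ψ : ZMod m → ZMod m,
      Set.InjOn ψ P ∧ ∀ p ∈ P, (ψ p = p + 1 ∨ ψ p = p - 1) ∧ ψ p ≠ p₀ - 1 := by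
  classical
  have hm1 : m ≠ 1 := by
    rintro rfl
    exact hP p₀ hp₀ (by rwa [show (1 : ZMod 1) = 0 from rfl, add_zero])
  -- going up from `p₀` in steps of two leaves `P` at the latest at `p₀ + (m + 1) = p₀ + 1`;
  -- the classes `p₀, p₀ + 2, …` passed on the way are sent up, all others down
  have hlast : p₀ + 2 * (((m + 1) / 2 : ℕ) : ZMod m) ∉ P := by
    have : 2 * (((m + 1) / 2 : ℕ) : ZMod m) = 1 := by
      rw [← Nat.cast_ofNat, ← Nat.cast_mul, show 2 * ((m + 1) / 2) = m + 1 by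
        obtain ⟨ℓ, rfl⟩ := hm; omega]
      simp
    rw [this]
    exact hP p₀ hp₀
  have hm0 := hm.pos
  have hex : ∃ r : ℕ, 0 < r ∧ p₀ + 2 * (r : ZMod m) ∉ P :=
    ⟨(m + 1) / 2, by omega, hlast⟩
  have hr := Nat.find_spec hex
  have hr_le := Nat.find_min' hex ⟨by omega, hlast⟩
  set r := Nat.find hex
  set C : Set (ZMod m) := {q | ∃ i < r, q = p₀ + 2 * (i : ZMod m)}
  have hcross {x y : ZMod m} (hx : x ∈ C) (hy : y ∉ C) (hyP : y ∈ P) : x + 1 ≠ y - 1 := by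
    obtain ⟨i, hi, rfl⟩ := hx
    intro h
    have hy' : y = p₀ + 2 * ((i + 1 : ℕ) : ZMod m) := by push_cast; linear_combination -h
    rcases (Nat.succ_le_of_lt hi).lt_or_eq with hlt | heq
    · exact hy ⟨i + 1, hlt, hy'⟩
    · rw [← heq] at hr
      exact hr.2 (hy' ▸ hyP)
  have hup {x : ZMod m} (hx : x ∈ C) : x + 1 ≠ p₀ - 1 := by
    obtain ⟨i, hi, rfl⟩ := hx
    intro h
    have h0 : ((2 * (i + 1) : ℕ) : ZMod m) = 0 := by push_cast; linear_combination h
    rw [ZMod.natCast_eq_zero_iff] at h0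
    have := Nat.le_of_dvd (by omega) ((Nat.Coprime.dvd_mul_left
      (Nat.coprime_two_right.2 hm)).1 h0)
    omega
  refine ⟨fun q => if q ∈ C then q + 1 else q - 1, ?_, fun p hp => ?_⟩
  · intro x hx y hy hxy
    dsimp only at hxy
    split_ifs at hxy with hxC hyC hyC
    · exact add_right_cancel hxy
    · exact (hcross hxC hyC hy hxy).elim
    · exact (hcross hyC hxC hx hxy.symm).elim
    · exact sub_left_injective hxy
  · dsimp only
    split_ifs with hpC
    · exact ⟨Or.inl rfl, hup hpC⟩
    · refine ⟨Or.inr rfl, fun h => hpC ⟨0, hr.1, ?_⟩⟩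
      simpa using sub_left_injective h

lemma sum_add_le_sum_of_odd {m : ℕ} [NeZero m] (hm : Odd m) {P : Finset (ZMod m)}
    (hP : ∀ p ∈ P, p + 1 ∉ P) {p₀ : ZMod m} (hp₀ : p₀ ∈ P) {f g : ZMod m → ℝ}
    {c : ℝ} (hf : ∀ q, 0 ≤ f q) (hup : ∀ p ∈ P, g p ≤ f (p + 1))
    (hdn : ∀ p ∈ P, g p ≤ f (p - 1)) (hc : c ≤ f (p₀ - 1)) :
    ∑ p ∈ P, g p + c ≤ ∑ q, f q := by
  classical
  obtain ⟨ψ, hinj, hψ⟩ := exists_injOn_add_one_or_sub_one hm (P := ↑P) hP hp₀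
  have hnot : p₀ - 1 ∉ P.image ψ := by
    simp only [mem_image, not_exists, not_and]
    exact fun p hp => (hψ p hp).2
  calc ∑ p ∈ P, g p + c ≤ ∑ p ∈ P, f (ψ p) + f (p₀ - 1) := by
        refine add_le_add (sum_le_sum fun p hp => ?_) hc
        rcases (hψ p hp).1 with h | h <;> rw [h]
        exacts [hup p hp, hdn p hp]
    _ = ∑ q ∈ insert (p₀ - 1) (P.image ψ), f q := by
        rw [sum_insert hnot, sum_image hinj, add_comm]
    _ ≤ ∑ q, f q := sum_le_univ_sum_of_nonneg hf

section Ncard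

variable {m k : ℕ}

lemma ncard_inter_Eclass_le [NeZero m] (A : Set (Fin (k + 1) → ZMod m)) (p : ZMod m) :
    (A ∩ Eclass m (k + 1) p).ncard ≤ m ^ k := by
  classical
  rw [Set.ncard_eq_toFinset_card',
    ← card_image_tail (p := p) fun v hv => (Set.mem_toFinset.1 hv).2]
  exact (card_le_univ _).trans_eq (by simp)

theorem ncard_add_le_ncard_nbhd_inter_Eclass (hm : 2 ≤ m) {P : Set (ZMod m)}
    (hP : ∀ p ∈ P, p + 1 ∉ P) {A : Set (Fin (k + 1) → ZMod m)}
    (hA : A ⊆ ⋃ p ∈ P, Eclass m (k + 1) p) {p q : ZMod m} (hp : p ∈ P)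
    (hq : q = p + 1 ∨ q = p - 1) :
    (A ∩ Eclass m (k + 1) p).ncard + classGain m k (A ∩ Eclass m (k + 1) p).ncard ≤
      (nbhd (torus m (k + 1)) A ∩ Eclass m (k + 1) q).ncard := by
  classical
  have : Fact (1 < m) := ⟨hm⟩
  set B := (A ∩ Eclass m (k + 1) p).toFinset
  have hB : ∀ v ∈ B, ∑ i, v i = p := fun v hv => (Set.mem_toFinset.1 hv).2
  have hBA : ↑B ⊆ A := by simp [B]
  rw [Set.ncard_eq_toFinset_card' (A ∩ _)]
  rcases hq with rfl | rfl
  · refine (card_add_le_card_upShift hm hB).trans ?_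
    rw [← Set.ncard_coe_finset]
    exact_mod_cast Set.ncard_le_ncard (coe_upShift_subset hA hBA hB (hP p hp))
  · refine (card_add_le_card_neg_upShift_neg hm hB).trans ?_
    rw [← Set.ncard_coe_finset]
    exact_mod_cast Set.ncard_le_ncard
      (coe_neg_upShift_neg_subset hA hBA hB fun h => hP _ h (by rwa [sub_add_cancel]))

end Ncard

/-- For a nonempty independent set `P` of the `m`-cycle (no two cyclically consecutive
residues) and `A ⊆ ⋃_{p ∈ P} E_m^n(p)`, writing `α_p := |A ∩ E_m^n(p)|/m^(n−1)`:
`|N(A)| ≥ |A| + max_{p ∈ P} |A ∩ E_m^n(p)| + (m^(n−1)/√(ℓ³mn))·Σ_{p ∈ P} α_p(1−α_p)`. -/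
theorem stmt_19 (m n : ℕ) (hm : 3 ≤ m) (hmo : Odd m) (hn : 1 ≤ n)
    (P : Set (ZMod m)) (hPne : P.Nonempty) (hPind : ∀ p ∈ P, p + 1 ∉ P)
    (A : Set (Fin n → ZMod m)) (hA : A ⊆ ⋃ p ∈ P, Eclass m n p) :
    (A.ncard : ℝ) + (⨆ p ∈ P, ((A ∩ Eclass m n p).ncard : ℝ)) +
        (m : ℝ) ^ (n - 1) / Real.sqrt (((m / 2 : ℕ) : ℝ) ^ 3 * m * n) *
          ∑ᶠ p ∈ P, ((A ∩ Eclass m n p).ncard / (m : ℝ) ^ (n - 1)) *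
            (1 - ((A ∩ Eclass m n p).ncard : ℝ) / (m : ℝ) ^ (n - 1)) ≤
      ((nbhd (torus m n) A).ncard : ℝ) := by
  classical
  have : NeZero m := ⟨by omega⟩
  obtain ⟨k, rfl⟩ : ∃ k, n = k + 1 := ⟨n - 1, by omega⟩
  rw [Nat.add_sub_cancel]
  obtain ⟨p₀, hp₀, hmax⟩ := P.toFinset.exists_max_image
    (fun p => (A ∩ Eclass m (k + 1) p).ncard) (Set.toFinset_nonempty.2 hPne)
  rw [Set.mem_toFinset] at hp₀
  have hbound {p q} (hp : p ∈ P) (hq : q = p + 1 ∨ q = p - 1) :=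
    ncard_add_le_ncard_nbhd_inter_Eclass (by omega) hPind hA hp hq
  have hcount := sum_add_le_sum_of_odd hmo (P := P.toFinset) (by simpa using hPind)
    (Set.mem_toFinset.2 hp₀)
    (f := fun q => (nbhd (torus m (k + 1)) A ∩ Eclass m (k + 1) q).ncard)
    (fun _ => Nat.cast_nonneg _) (fun p hp => hbound (Set.mem_toFinset.1 hp) (Or.inl rfl))
    (fun p hp => hbound (Set.mem_toFinset.1 hp) (Or.inr rfl))
    ((le_add_of_nonneg_right (classGain_nonneg (Nat.cast_nonneg _)
      (by exact_mod_cast ncard_inter_Eclass_le A p₀))).trans (hbound hp₀ (Or.inr rfl)))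
  have hsup : ⨆ p ∈ P, ((A ∩ Eclass m (k + 1) p).ncard : ℝ) ≤
      (A ∩ Eclass m (k + 1) p₀).ncard :=
    Real.iSup_le (fun p => Real.iSup_le (fun hp => by exact_mod_cast hmax p (by simpa using hp))
      (Nat.cast_nonneg _)) (Nat.cast_nonneg _)
  have hAsum := ncard_eq_sum_ncard_inter_Eclass A P.toFinset fun v hv => by
    obtain ⟨p, hp, hvp⟩ := Set.mem_iUnion₂.1 (hA hv)
    rwa [Set.mem_toFinset, show ∑ i, v i = p from hvp]
  have hNsum := ncard_eq_sum_ncard_inter_Eclass (nbhd (torus m (k + 1)) A) univ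
    fun _ _ => mem_univ _
  rw [hAsum, hNsum, finsum_mem_eq_toFinset_sum, Nat.cast_sum, Nat.cast_sum, mul_sum]
  rw [sum_add_distrib] at hcount
  simp only [classGain] at hcount
  linarith
end
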